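/- arXiv:2112.10867 — 4 statements merged into one kernel-verified Lean document; each statement's English description precedes it below -/
import Mathlib

section
/- For any density matrix ρ on an N-dimensional Hilbert space, the minimum quantum relative entropy S(ρ‖δ) over all states δ diagonal in a fixed orthonormal basis equals S(Δ(ρ)) − S(ρ), where Δ(ρ) is the diagonal (dephased) part of ρ, and the minimum is attained at δ = Δ(ρ). -/
/-!
Since `δ` is diagonal, `Tr ρ log δ` only sees the diagonal `p μ = ⟨μ|ρ|μ⟩` of `ρ`, so
`S(ρ‖δ) - S(ρ‖Δ(ρ)) = ∑ μ, p μ log (p μ / d μ)` is the classical relative entropy of the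
probability vectors `p` and `d`, which is nonnegative by Gibbs' inequality.
-/

open Matrix BigOperators ComplexOrder

/-- von Neumann entropy `S(ρ) = -Tr ρ log ρ` via the eigenvalues of a Hermitian matrix. -/
noncomputable def vnEntropy {N : ℕ} (ρ : Matrix (Fin N) (Fin N) ℂ) (h : ρ.IsHermitian) : ℝ :=
  -∑ i, h.eigenvalues i * Real.log (h.eigenvalues i)

/-- Quantum relative entropy `S(ρ‖δ) = Tr ρ log ρ - Tr ρ log δ` where `δ` is the
incoherent (diagonal) state with diagonal entries `d`. -/
noncomputable def relEntropyToDiag {N : ℕ} (ρ : Matrix (Fin N) (Fin N) ℂ) (h : ρ.IsHermitian)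
    (d : Fin N → ℝ) : ℝ :=
  (∑ i, h.eigenvalues i * Real.log (h.eigenvalues i)) - ∑ μ, (ρ μ μ).re * Real.log (d μ)

open Real

lemma sub_le_mul_log_sub_mul_log {p d : ℝ} (hp : 0 ≤ p) (hd : 0 ≤ d) (hpd : d = 0 → p = 0) :
    p - d ≤ p * log p - p * log d := by
  rcases hp.eq_or_lt with rfl | hp
  · simpa using hd
  have hd : 0 < d := hd.lt_of_ne fun h => hp.ne' (hpd h.symm)
  have h := mul_le_mul_of_nonneg_left (log_le_sub_one_of_pos (div_pos hd hp)) hp.le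
  rw [log_div hd.ne' hp.ne', mul_sub, mul_sub, mul_div_cancel₀ _ hp.ne'] at h
  linarith

theorem Finset.sum_mul_log_le_sum_mul_log {ι : Type*} {s : Finset ι} {p d : ι → ℝ}
    (hp : ∀ i ∈ s, 0 ≤ p i) (hd : ∀ i ∈ s, 0 ≤ d i) (hsum : ∑ i ∈ s, d i ≤ ∑ i ∈ s, p i)
    (hpd : ∀ i ∈ s, d i = 0 → p i = 0) :
    ∑ i ∈ s, p i * log (d i) ≤ ∑ i ∈ s, p i * log (p i) := by
  have h : ∑ i ∈ s, (p i - d i) ≤ ∑ i ∈ s, (p i * log (p i) - p i * log (d i)) :=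
    Finset.sum_le_sum fun i hi => sub_le_mul_log_sub_mul_log (hp i hi) (hd i hi) (hpd i hi)
  rw [Finset.sum_sub_distrib, Finset.sum_sub_distrib] at h
  linarith

section RelEntropyToDiag

variable {N : ℕ} {ρ : Matrix (Fin N) (Fin N) ℂ} (h : ρ.IsHermitian)

lemma relEntropyToDiag_diag :
    relEntropyToDiag ρ h (fun μ => (ρ μ μ).re)
      = (-∑ μ, (ρ μ μ).re * log ((ρ μ μ).re)) - vnEntropy ρ h := by
  simp only [relEntropyToDiag, vnEntropy]
  ring

lemma relEntropyToDiag_diag_le {d : Fin N → ℝ} (hρ : ∀ μ, 0 ≤ (ρ μ μ).re)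
    (hd : ∀ μ, 0 ≤ d μ) (hsum : ∑ μ, d μ ≤ ∑ μ, (ρ μ μ).re)
    (hsupp : ∀ μ, d μ = 0 → (ρ μ μ).re = 0) :
    relEntropyToDiag ρ h (fun μ => (ρ μ μ).re) ≤ relEntropyToDiag ρ h d :=
  sub_le_sub_left (Finset.sum_mul_log_le_sum_mul_log (fun μ _ => hρ μ) (fun μ _ => hd μ) hsum
    (fun μ _ => hsupp μ)) _

end RelEntropyToDiag

/-- The minimum of `S(ρ‖δ)` over incoherent states `δ` (whose support contains that of `Δ(ρ)`)
equals `S(Δ(ρ)) - S(ρ)`, and is attained at `δ = Δ(ρ)`. -/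
theorem stmt0 {N : ℕ} (ρ : Matrix (Fin N) (Fin N) ℂ) (hρ : ρ.PosSemidef)
    (htr : ρ.trace = 1) :
    IsLeast {x : ℝ | ∃ d : Fin N → ℝ, (∀ μ, 0 ≤ d μ) ∧ (∑ μ, d μ) = 1 ∧
        (∀ μ, d μ = 0 → (ρ μ μ).re = 0) ∧ x = relEntropyToDiag ρ hρ.1 d}
      ((-∑ μ, (ρ μ μ).re * Real.log ((ρ μ μ).re)) - vnEntropy ρ hρ.1) ∧
    relEntropyToDiag ρ hρ.1 (fun μ => (ρ μ μ).re)
      = (-∑ μ, (ρ μ μ).re * Real.log ((ρ μ μ).re)) - vnEntropy ρ hρ.1 := by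
  have hdiag : ∀ μ, 0 ≤ (ρ μ μ).re := fun μ => (Complex.le_def.mp hρ.diag_nonneg).1
  have hsum : ∑ μ, (ρ μ μ).re = 1 := by
    simpa [Matrix.trace, Complex.re_sum] using congrArg Complex.re htr
  refine ⟨⟨⟨_, hdiag, hsum, fun _ h => h, (relEntropyToDiag_diag hρ.1).symm⟩, ?_⟩,
    relEntropyToDiag_diag hρ.1⟩
  rintro x ⟨d, hd, hd_sum, hsupp, rfl⟩
  rw [← relEntropyToDiag_diag hρ.1]
  exact relEntropyToDiag_diag_le hρ.1 hdiag hd (hd_sum.trans hsum.symm).le hsupp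
end

section
/- Let Λ be the linear map on N×N matrices defined by Λ(ρ)_{μμ} = ρ_{μμ} and Λ(ρ)_{μν} = (1+α) ρ_{μν} for μ ≠ ν, where α ∈ ℝ. Then Λ is completely positive and trace preserving if and only if α ∈ [−N/(N−1), 0]. -/
/-!
On a vector `x` indexed by pairs, the Choi matrix only sees the diagonal entries
`y μ = x (μ, μ)`, and its quadratic form is `(1 + α) |∑ y|² - α ∑ |y|²`. For `N ≥ 2`, testing
this form on `y = e_i - e_j` and on `y = 1` gives `α ≤ 0` and `N + α (N - 1) ≥ 0`; conversely
these two conditions suffice, by Cauchy–Schwarz `|∑ y|² ≤ N ∑ |y|²` when `1 + α < 0`.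
Trace preservation holds for every `α`.
-/

open Matrix BigOperators ComplexOrder

/-- The uniform dephasing-type map: diagonal entries preserved, off-diagonal entries
multiplied by `1 + α`. -/
noncomputable def dephasingMap {N : ℕ} (α : ℝ) (ρ : Matrix (Fin N) (Fin N) ℂ) :
    Matrix (Fin N) (Fin N) ℂ :=
  Matrix.of fun μ ν => if μ = ν then ρ μ ν else (1 + (α : ℂ)) * ρ μ ν

/-- The Choi matrix `J_Λ = ∑_{μν} |μ⟩⟨ν| ⊗ Λ(|μ⟩⟨ν|)` of the map. -/
noncomputable def choiMatrix {N : ℕ} (Λ : Matrix (Fin N) (Fin N) ℂ → Matrix (Fin N) (Fin N) ℂ) :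
    Matrix (Fin N × Fin N) (Fin N × Fin N) ℂ :=
  Matrix.of fun p q => (Λ (Matrix.single p.1 q.1 1)) p.2 q.2

lemma Complex.normSq_sum_le_card_mul {ι : Type*} [Fintype ι] (y : ι → ℂ) :
    Complex.normSq (∑ i, y i) ≤ Fintype.card ι * ∑ i, Complex.normSq (y i) := by
  simp only [← Complex.sq_norm]
  calc ‖∑ i, y i‖ ^ 2 ≤ (∑ i, ‖y i‖) ^ 2 := by gcongr; exact norm_sum_le _ _
    _ ≤ Fintype.card ι * ∑ i, ‖y i‖ ^ 2 := sq_sum_le_card_mul_sum_sq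

lemma forall_nonneg_normSq_sum_form_iff {ι : Type*} [Fintype ι] [Nontrivial ι] (a b : ℝ) :
    (∀ y : ι → ℂ, 0 ≤ a * Complex.normSq (∑ i, y i) + b * ∑ i, Complex.normSq (y i)) ↔
      0 ≤ b ∧ 0 ≤ a * Fintype.card ι + b := by
  classical
  constructor
  · intro h
    constructor
    · obtain ⟨i, j, hij⟩ := exists_pair_ne ι
      set y : ι → ℂ := Pi.single i 1 - Pi.single j 1
      have hsum : ∑ k, y k = 0 := by simp [y, Finset.sum_sub_distrib]
      have hyi : Complex.normSq (y i) = 1 := by simp [y, hij]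
      have hT : 1 ≤ ∑ k, Complex.normSq (y k) :=
        hyi ▸ Finset.single_le_sum (fun k _ => Complex.normSq_nonneg (y k)) (Finset.mem_univ i)
      have := h y
      rw [hsum, map_zero, mul_zero, zero_add] at this
      nlinarith
    · have hcard : (0 : ℝ) < Fintype.card ι := by exact_mod_cast Fintype.card_pos
      have := h 1
      simp only [Pi.one_apply, Finset.sum_const, Finset.card_univ, nsmul_eq_mul, mul_one,
        Complex.normSq_natCast, map_one] at this
      nlinarith
  · rintro ⟨hb, hab⟩ y
    have hT : 0 ≤ ∑ i, Complex.normSq (y i) :=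
      Finset.sum_nonneg fun i _ => Complex.normSq_nonneg (y i)
    rcases le_or_gt 0 a with ha | ha
    · have := Complex.normSq_nonneg (∑ i, y i)
      positivity
    · nlinarith [Complex.normSq_sum_le_card_mul y]

lemma Fintype.sum_ite_fst_eq_snd {ι M : Type*} [Fintype ι] [DecidableEq ι] [AddCommMonoid M]
    (f : ι × ι → M) :
    ∑ p : ι × ι, (if p.1 = p.2 then f p else 0) = ∑ i, f (i, i) := by
  simp [Fintype.sum_prod_type]

lemma choiMatrix_dephasingMap_apply {N : ℕ} (α : ℝ) (p q : Fin N × Fin N) :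
    choiMatrix (dephasingMap α) p q =
      if p.1 = p.2 ∧ q.1 = q.2 then (if p.1 = q.1 then 1 else 1 + (α : ℂ)) else 0 := by
  obtain ⟨μ, μ'⟩ := p
  obtain ⟨ν, ν'⟩ := q
  simp only [choiMatrix, dephasingMap, Matrix.single, Matrix.of_apply]
  by_cases h1 : μ = μ' <;> by_cases h2 : ν = ν' <;> by_cases h3 : μ' = ν' <;> simp_all

lemma isHermitian_choiMatrix_dephasingMap {N : ℕ} (α : ℝ) :
    (choiMatrix (dephasingMap (N := N) α)).IsHermitian := by
  ext p q
  simp only [conjTranspose_apply, choiMatrix_dephasingMap_apply]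
  by_cases h1 : p.1 = p.2 <;> by_cases h2 : q.1 = q.2 <;> by_cases h3 : p.1 = q.1 <;>
    simp_all [eq_comm]

lemma choiMatrix_dephasingMap_mulVec {N : ℕ} (α : ℝ) (x : Fin N × Fin N → ℂ)
    (p : Fin N × Fin N) :
    (choiMatrix (dephasingMap α) *ᵥ x) p =
      if p.1 = p.2 then (1 + α) * ∑ μ, x (μ, μ) - α * x p else 0 := by
  split_ifs with hp
  · obtain ⟨μ, μ'⟩ := p
    obtain rfl : μ = μ' := hp
    have hterm : ∀ ν : Fin N, (if μ = ν then 1 * x (ν, ν) else (1 + α) * x (ν, ν)) =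
        (1 + α) * x (ν, ν) - if μ = ν then α * x (ν, ν) else 0 := by
      intro ν; split_ifs <;> ring
    simp only [mulVec, dotProduct, choiMatrix_dephasingMap_apply, true_and, ite_mul, zero_mul]
    rw [Fintype.sum_ite_fst_eq_snd]
    simp only [hterm, Finset.sum_sub_distrib, ← Finset.mul_sum, Finset.sum_ite_eq,
      Finset.mem_univ, if_true]
  · simp [mulVec, dotProduct, choiMatrix_dephasingMap_apply, hp]

lemma dotProduct_choiMatrix_dephasingMap_mulVec {N : ℕ} (α : ℝ) (x : Fin N × Fin N → ℂ) :
    star x ⬝ᵥ choiMatrix (dephasingMap α) *ᵥ x =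
      (((1 + α) * Complex.normSq (∑ μ, x (μ, μ)) +
        -α * ∑ μ, Complex.normSq (x (μ, μ)) : ℝ) : ℂ) := by
  simp only [dotProduct, choiMatrix_dephasingMap_mulVec, mul_ite, mul_zero]
  rw [Fintype.sum_ite_fst_eq_snd]
  set S := ∑ μ, x (μ, μ)
  calc ∑ μ, star (x (μ, μ)) * ((1 + α) * S - α * x (μ, μ))
      = ∑ μ, ((1 + α) * (star (x (μ, μ)) * S) - α * (star (x (μ, μ)) * x (μ, μ))) :=
        Finset.sum_congr rfl fun μ _ => by ring
    _ = (1 + α) * (star S * S) - α * ∑ μ, star (x (μ, μ)) * x (μ, μ) := by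
        rw [Finset.sum_sub_distrib, ← Finset.mul_sum, ← Finset.mul_sum, ← Finset.sum_mul,
          star_sum]
    _ = _ := by
        push_cast
        simp only [Complex.normSq_eq_conj_mul_self, Complex.star_def]
        ring

lemma posSemidef_choiMatrix_dephasingMap_iff {N : ℕ} (hN : 2 ≤ N) (α : ℝ) :
    (choiMatrix (dephasingMap (N := N) α)).PosSemidef ↔
      0 ≤ -α ∧ 0 ≤ (1 + α) * N + -α := by
  have := Fin.nontrivial_iff_two_le.mpr hN
  have hform := forall_nonneg_normSq_sum_form_iff (ι := Fin N) (1 + α) (-α)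
  rw [Fintype.card_fin] at hform
  rw [← hform, posSemidef_iff_dotProduct_mulVec]
  simp only [isHermitian_choiMatrix_dephasingMap, true_and,
    dotProduct_choiMatrix_dephasingMap_mulVec, Complex.zero_le_real]
  constructor
  · intro h y
    simpa using h fun p => if p.1 = p.2 then y p.1 else 0
  · intro h x
    exact h fun μ => x (μ, μ)

lemma trace_dephasingMap {N : ℕ} (α : ℝ) (ρ : Matrix (Fin N) (Fin N) ℂ) :
    (dephasingMap α ρ).trace = ρ.trace := by
  simp [trace, dephasingMap]

/-- `Λ` with `Λ(ρ)_{μμ} = ρ_{μμ}`, `Λ(ρ)_{μν} = (1+α)ρ_{μν}` (μ≠ν) is CPTP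
iff `α ∈ [-N/(N-1), 0]`. -/
theorem stmt2 {N : ℕ} (hN : 2 ≤ N) (α : ℝ) :
    ((choiMatrix (dephasingMap (N := N) α)).PosSemidef ∧
      ∀ ρ : Matrix (Fin N) (Fin N) ℂ, (dephasingMap α ρ).trace = ρ.trace)
    ↔ α ∈ Set.Icc (-(N : ℝ) / ((N : ℝ) - 1)) 0 := by
  have hN1 : (0 : ℝ) < N - 1 := by
    have : (2 : ℝ) ≤ N := by exact_mod_cast hN
    linarith
  rw [posSemidef_choiMatrix_dephasingMap_iff hN, Set.mem_Icc, div_le_iff₀ hN1]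
  simp only [trace_dephasingMap, implies_true, and_true]
  constructor <;> rintro ⟨h1, h2⟩ <;> constructor <;> linarith
end

section
/- Let Λ_{ε,γ} be the map on N×N matrices with Λ(ρ)_{μμ} = (1−ε)ρ_{μμ} + (ε/(N−1)) Σ_{ν≠μ} ρ_{νν}, Λ(ρ)_{μν} = (1+α)ρ_{μν} + γ·(conjugate-partner coupling) for μ≠ν as in the faulty-aQNN model. If α ∈ [(ε−N)/(N−1), −ε] and |γ| ≤ ε/(N−1), then the Choi matrix of Λ_{ε,γ} is positive semidefinite and Λ_{ε,γ} is trace preserving; hence Λ_{ε,γ} is CPTP. -/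
/-!
Write `c = ε/(N-1)`. The map splits as `Λ ρ = (1+α) ρ + (-ε-α) diag ρ + c Ω ρ + Γ ρ`, where
`(Ω ρ)_{μμ} = ∑_{ν≠μ} ρ_{νν}` and `Γ` couples `ρ_{μν}` to `ρ_{νμ}` with weight `γ` or `γ̄`.
Accordingly the quadratic form of the Choi matrix at `x` is
`(-ε-α) ∑ |x_{aa}|² + (1+α) |∑ x_{aa}|²  +  c ∑_{a≠b} |x_{ab}|²  +  (Γ-terms)`.
The first part is the form of `J = (-ε-α) I + (1+α) 𝟙𝟙ᵀ`, whose eigenvalues `-ε-α` and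
`N-ε+(N-1)α` are nonnegative exactly by the bounds on `α` (use Cauchy–Schwarz when `1+α < 0`);
the Γ-terms are bounded by the second part by AM–GM, since `|γ| ≤ c`. Hermiticity of the Choi
matrix comes from `Λ ρᴴ = (Λ ρ)ᴴ`, and trace preservation from `c (N-1) = ε`.
-/

open Matrix BigOperators ComplexOrder

/-- The faulty dephasing map `Λ_{ε,γ}`: diagonal entries suffer a depolarizing-type error
`ρ_{μμ} ↦ (1-ε)ρ_{μμ} + (ε/(N-1)) ∑_{ν≠μ} ρ_{νν}`, and off-diagonal entries get
`ρ_{μν} ↦ (1+α)ρ_{μν} + γ ρ_{νμ}`-type coupling (with `γ̄` for `μ < ν`, `γ` for `ν < μ`). -/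
noncomputable def faultyMap {N : ℕ} (ε α : ℝ) (γ : ℂ)
    (ρ : Matrix (Fin N) (Fin N) ℂ) : Matrix (Fin N) (Fin N) ℂ :=
  Matrix.of fun μ ν =>
    if μ = ν then
      ((1 - ε : ℝ) : ℂ) * ρ μ μ +
        ((ε / ((N : ℝ) - 1) : ℝ) : ℂ) * ∑ ν' ∈ Finset.univ.filter (· ≠ μ), ρ ν' ν'
    else if μ < ν then (1 + (α : ℂ)) * ρ μ ν + (starRingEnd ℂ) γ * ρ ν μ
    else (1 + (α : ℂ)) * ρ μ ν + γ * ρ ν μ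

section NormSq

variable {ι E : Type*} [Fintype ι] [SeminormedAddCommGroup E]

theorem norm_sum_sq_le_card_mul_sum_norm_sq (y : ι → E) :
    ‖∑ i, y i‖ ^ 2 ≤ Fintype.card ι * ∑ i, ‖y i‖ ^ 2 := by
  calc ‖∑ i, y i‖ ^ 2 ≤ (∑ i, ‖y i‖) ^ 2 := by gcongr; exact norm_sum_le _ _
    _ ≤ Fintype.card ι * ∑ i, ‖y i‖ ^ 2 := sq_sum_le_card_mul_sum_sq

theorem mul_sum_norm_sq_add_mul_norm_sum_sq_nonneg {s t : ℝ} (hs : 0 ≤ s)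
    (hst : 0 ≤ s + Fintype.card ι * t) (y : ι → E) :
    0 ≤ s * ∑ i, ‖y i‖ ^ 2 + t * ‖∑ i, y i‖ ^ 2 := by
  have hT : 0 ≤ ∑ i, ‖y i‖ ^ 2 := by positivity
  rcases le_or_gt 0 t with ht | ht
  · positivity
  · nlinarith [norm_sum_sq_le_card_mul_sum_norm_sq y]

end NormSq

theorem norm_sum_sum_mul_star_mul_swap_le {ι 𝕜 : Type*} [Fintype ι] [RCLike 𝕜]
    (w : ι → ι → 𝕜) (C : ι → ι → ℝ) (hw : ∀ a b, ‖w a b‖ ≤ C a b) (hC : ∀ a b, C a b = C b a)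
    (f : ι → ι → 𝕜) :
    ‖∑ a, ∑ b, w a b * (star (f a b) * f b a)‖ ≤ ∑ a, ∑ b, C a b * ‖f a b‖ ^ 2 := by
  have hamgm : ∀ a b, ‖w a b * (star (f a b) * f b a)‖
      ≤ C a b * ‖f a b‖ ^ 2 / 2 + C b a * ‖f b a‖ ^ 2 / 2 := by
    intro a b
    have hC0 : 0 ≤ C a b := (norm_nonneg _).trans (hw a b)
    rw [norm_mul, norm_mul, norm_star, hC b a]
    calc ‖w a b‖ * (‖f a b‖ * ‖f b a‖) ≤ C a b * (‖f a b‖ * ‖f b a‖) := by gcongr; exact hw a b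
      _ ≤ _ := by nlinarith [mul_nonneg hC0 (sq_nonneg (‖f a b‖ - ‖f b a‖))]
  calc ‖∑ a, ∑ b, w a b * (star (f a b) * f b a)‖
      ≤ ∑ a, ∑ b, ‖w a b * (star (f a b) * f b a)‖ := by
        refine (norm_sum_le _ _).trans (Finset.sum_le_sum fun a _ => norm_sum_le _ _)
    _ ≤ ∑ a, ∑ b, (C a b * ‖f a b‖ ^ 2 / 2 + C b a * ‖f b a‖ ^ 2 / 2) := by
        gcongr with a _ b _; exact hamgm a b
    _ = ∑ a, ∑ b, C a b * ‖f a b‖ ^ 2 := by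
        simp only [Finset.sum_add_distrib]
        rw [Finset.sum_comm (f := fun a b => C b a * ‖f b a‖ ^ 2 / 2), ← Finset.sum_add_distrib]
        simp only [← Finset.sum_add_distrib, add_halves]

open scoped ComplexOrder in
theorem Matrix.PosSemidef.of_re_dotProduct_mulVec_nonneg {ι 𝕜 : Type*} [Fintype ι] [RCLike 𝕜]
    {A : Matrix ι ι 𝕜} (hA : A.IsHermitian) (h : ∀ x, 0 ≤ RCLike.re (star x ⬝ᵥ A *ᵥ x)) :
    A.PosSemidef :=
  .of_dotProduct_mulVec_nonneg hA fun x =>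
    RCLike.nonneg_iff.mpr ⟨h x, hA.im_star_dotProduct_mulVec_self x⟩

theorem sum_sum_filter_ne {ι R : Type*} [Fintype ι] [DecidableEq ι] [CommRing R] (f : ι → R) :
    ∑ μ, ∑ ν ∈ Finset.univ.filter (· ≠ μ), f ν = (Fintype.card ι - 1) * ∑ ν, f ν := by
  simp only [Finset.filter_ne', Finset.sum_erase_eq_sub (Finset.mem_univ _), Finset.sum_sub_distrib,
    Finset.sum_const, Finset.card_univ, nsmul_eq_mul]
  ring

section Choi

variable {N : ℕ}

theorem choiMatrix_isHermitian {Λ : Matrix (Fin N) (Fin N) ℂ → Matrix (Fin N) (Fin N) ℂ}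
    (hΛ : ∀ ρ, Λ ρᴴ = (Λ ρ)ᴴ) : (choiMatrix Λ).IsHermitian := by
  ext p q
  rw [conjTranspose_apply, choiMatrix, of_apply, of_apply, ← conjTranspose_apply, ← hΛ,
    conjTranspose_single, star_one]

theorem star_dotProduct_choiMatrix_mulVec
    (Λ : Matrix (Fin N) (Fin N) ℂ → Matrix (Fin N) (Fin N) ℂ) (x : Fin N × Fin N → ℂ) :
    star x ⬝ᵥ choiMatrix Λ *ᵥ x =
      ∑ μ, ∑ a, ∑ ν, ∑ b, star (x (μ, a)) * Λ (single μ ν 1) a b * x (ν, b) := by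
  simp only [dotProduct, mulVec, Fintype.sum_prod_type, Finset.mul_sum, choiMatrix, of_apply,
    Pi.star_apply, mul_assoc]

end Choi

section FaultyMap

variable {N : ℕ}

/-- The coefficient of `ρ ν μ` in `faultyMap ε α γ ρ μ ν`. -/
def faultyCoupling (γ : ℂ) (μ ν : Fin N) : ℂ :=
  if μ < ν then starRingEnd ℂ γ else if ν < μ then γ else 0

theorem faultyMap_eq (ε α : ℝ) (γ : ℂ) (ρ : Matrix (Fin N) (Fin N) ℂ) :
    faultyMap ε α γ ρ = (1 + α : ℂ) • ρ + ((-ε - α : ℝ) : ℂ) • diagonal (diag ρ)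
      + ((ε / ((N : ℝ) - 1) : ℝ) : ℂ) • diagonal (fun μ => ∑ ν ∈ Finset.univ.filter (· ≠ μ), ρ ν ν)
      + of fun μ ν => faultyCoupling γ μ ν * ρ ν μ := by
  ext μ ν
  rcases lt_trichotomy μ ν with h | rfl | h
  · simp [faultyMap, faultyCoupling, h, h.ne]
  · simp [faultyMap, faultyCoupling]; ring
  · simp [faultyMap, faultyCoupling, h, h.ne', h.not_gt]

theorem star_dotProduct_choiMatrix_faultyMap_mulVec (ε α : ℝ) (γ : ℂ) (x : Fin N × Fin N → ℂ) :
    star x ⬝ᵥ choiMatrix (faultyMap ε α γ) *ᵥ x =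
      (((-ε - α) * ∑ a, ‖x (a, a)‖ ^ 2 + (1 + α) * ‖∑ a, x (a, a)‖ ^ 2
        + ∑ a, ∑ b, (if a = b then 0 else ε / ((N : ℝ) - 1)) * ‖x (a, b)‖ ^ 2 : ℝ) : ℂ)
      + ∑ a, ∑ b, faultyCoupling γ b a * (star (x (a, b)) * x (b, a)) := by
  have hS : (∑ a, starRingEnd ℂ (x (a, a))) * ∑ a, x (a, a) = ‖∑ a, x (a, a)‖ ^ 2 := by
    rw [← map_sum, Complex.conj_mul']
  have hT : ∑ a, starRingEnd ℂ (x (a, a)) * (-ε - α) * x (a, a)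
      = (-ε - α) * ∑ a, (‖x (a, a)‖ : ℂ) ^ 2 := by
    simp only [Finset.mul_sum, ← Complex.conj_mul']
    exact Finset.sum_congr rfl fun _ _ => by ring
  have hW : ∑ a, ∑ b, (if a = b then 0 else starRingEnd ℂ (x (a, b)) * (ε / (N - 1)) * x (a, b))
      = ∑ a, ∑ b, ((if a = b then 0 else ε / ((N : ℝ) - 1) * ‖x (a, b)‖ ^ 2 : ℝ) : ℂ) := by
    refine Finset.sum_congr rfl fun a _ => Finset.sum_congr rfl fun b _ => ?_
    split_ifs
    · simp
    · push_cast; rw [← Complex.conj_mul']; ring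
  have hcoupling : ∑ a, ∑ b, starRingEnd ℂ (x (a, b)) * faultyCoupling γ b a * x (b, a)
      = ∑ a, ∑ b, faultyCoupling γ b a * (starRingEnd ℂ (x (a, b)) * x (b, a)) :=
    Finset.sum_congr rfl fun _ _ => Finset.sum_congr rfl fun _ _ => by ring
  simp only [star_dotProduct_choiMatrix_mulVec, faultyMap_eq, Matrix.add_apply, Matrix.smul_apply,
    mul_add, add_mul, Finset.sum_add_distrib]
  simp only [RCLike.star_def, single_apply, ite_and, smul_eq_mul, mul_ite, mul_one, mul_zero,
    ite_mul, zero_mul, Finset.sum_ite_irrel, Finset.sum_ite_eq, Finset.mem_univ, ↓reduceIte,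
    Finset.sum_const_zero, ← Finset.mul_sum, ← Finset.sum_mul, Complex.ofReal_sub,
    Complex.ofReal_neg, diagonal_apply, diag_apply, Finset.sum_ite_eq', Complex.ofReal_div,
    Complex.ofReal_natCast, Complex.ofReal_one, ne_eq, Finset.mem_filter, true_and, ite_not,
    of_apply, one_mul, Complex.ofReal_add, Complex.ofReal_mul, Complex.ofReal_sum,
    Complex.ofReal_pow]
  linear_combination (1 + (α : ℂ)) * hS + hT + hW + hcoupling

theorem faultyMap_conjTranspose (ε α : ℝ) (γ : ℂ) (ρ : Matrix (Fin N) (Fin N) ℂ) :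
    faultyMap ε α γ ρᴴ = (faultyMap ε α γ ρ)ᴴ := by
  ext μ ν
  rcases lt_trichotomy μ ν with h | rfl | h
  · simp [faultyMap, h, h.ne, h.ne', h.not_gt]
  · simp [faultyMap]
  · simp [faultyMap, h, h.ne, h.ne', h.not_gt]

theorem trace_faultyMap (hN : N ≠ 1) (ε α : ℝ) (γ : ℂ) (ρ : Matrix (Fin N) (Fin N) ℂ) :
    (faultyMap ε α γ ρ).trace = ρ.trace := by
  have hN' : (N : ℂ) - 1 ≠ 0 := sub_ne_zero.mpr (mod_cast hN)
  simp only [trace, diag, faultyMap, of_apply, if_true, Finset.sum_add_distrib, ← Finset.mul_sum,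
    sum_sum_filter_ne, Fintype.card_fin]
  push_cast
  field_simp
  ring

theorem norm_faultyCoupling_le {γ : ℂ} {r : ℝ} (hγ : ‖γ‖ ≤ r) (μ ν : Fin N) :
    ‖faultyCoupling γ μ ν‖ ≤ if μ = ν then 0 else r := by
  rcases lt_trichotomy μ ν with h | rfl | h
  · simpa [faultyCoupling, h, h.ne] using hγ
  · simp [faultyCoupling]
  · simpa [faultyCoupling, h, h.ne', h.not_gt] using hγ

end FaultyMap

theorem stmt10_general {N : ℕ} (hN : 2 ≤ N) (ε α : ℝ) (γ : ℂ)
    (hαi : α ∈ Set.Icc ((ε - N) / ((N : ℝ) - 1)) (-ε))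
    (hγ : ‖γ‖ ≤ ε / ((N : ℝ) - 1)) :
    (choiMatrix (faultyMap (N := N) ε α γ)).PosSemidef ∧
      ∀ ρ : Matrix (Fin N) (Fin N) ℂ, (faultyMap ε α γ ρ).trace = ρ.trace := by
  obtain ⟨hα_lower, hα_upper⟩ := hαi
  have hN1 : (0 : ℝ) < N - 1 := by
    have : (2 : ℝ) ≤ N := mod_cast hN
    linarith
  refine ⟨.of_re_dotProduct_mulVec_nonneg (choiMatrix_isHermitian (faultyMap_conjTranspose ε α γ))
    fun x => ?_, trace_faultyMap (by omega) ε α γ⟩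
  have hdiag := mul_sum_norm_sq_add_mul_norm_sum_sq_nonneg (s := -ε - α) (t := 1 + α)
    (by linarith) (by rw [Fintype.card_fin]; nlinarith [(div_le_iff₀ hN1).mp hα_lower])
    fun a => x (a, a)
  have hcoupling := norm_sum_sum_mul_star_mul_swap_le (fun a b => faultyCoupling γ b a)
    (fun a b => if a = b then 0 else ε / ((N : ℝ) - 1))
    (fun a b => by simpa only [eq_comm] using norm_faultyCoupling_le hγ b a)
    (fun a b => by simp only [eq_comm]) fun a b => x (a, b)
  rw [star_dotProduct_choiMatrix_faultyMap_mulVec, map_add, RCLike.re_to_complex,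
    RCLike.re_to_complex, Complex.ofReal_re]
  linarith [neg_le_of_abs_le (Complex.abs_re_le_norm
    (∑ a, ∑ b, faultyCoupling γ b a * (star (x (a, b)) * x (b, a))))]

/-- If `α ∈ [(ε-N)/(N-1), -ε]` and `|γ| ≤ ε/(N-1)` then `Λ_{ε,γ}` is CPTP:
its Choi matrix is positive semidefinite and it is trace preserving. -/
theorem stmt10 {N : ℕ} (hN : 2 ≤ N) (ε α : ℝ) (γ : ℂ) (hε : ε ∈ Set.Icc (0 : ℝ) 1)
    (hαi : α ∈ Set.Icc ((ε - N) / ((N : ℝ) - 1)) (-ε))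
    (hγ : ‖γ‖ ≤ ε / ((N : ℝ) - 1)) :
    (choiMatrix (faultyMap (N := N) ε α γ)).PosSemidef ∧
      ∀ ρ : Matrix (Fin N) (Fin N) ℂ, (faultyMap ε α γ ρ).trace = ρ.trace :=
  stmt10_general hN ε α γ hαi hγ
end

section
/- Let Λ and Λ_ε be the dephasing-type maps with uniform parameter α (and γ = 0 for Λ_ε), whose Choi matrices differ by the diagonal matrix D = J_{Λ_ε} − J_Λ having entries −ε at positions (μμ,μμ) and ε/(N−1) at positions (μν,μν) for μ≠ν. Then the diamond distance between Λ and Λ_ε equals ε. In particular, the SDP min{λ : Z ≥ D, λI ≥ Tr_B(Z), Z ≥ 0} has optimal value ε. -/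
open Matrix BigOperators ComplexOrder

/-- Partial trace over the second tensor factor. -/
noncomputable def ptrB {N : ℕ} (X : Matrix (Fin N × Fin N) (Fin N × Fin N) ℂ) :
    Matrix (Fin N) (Fin N) ℂ :=
  Matrix.of fun μ ν => ∑ a, X (μ, a) (ν, a)

/-- The diagonal difference `D = J_{Λ_ε} - J_Λ` of the Choi matrices: entries `-ε` at
positions `(μμ,μμ)` and `ε/(N-1)` at positions `(μν,μν)` for `μ ≠ ν`. -/
noncomputable def choiDiff (N : ℕ) (ε : ℝ) : Matrix (Fin N × Fin N) (Fin N × Fin N) ℂ :=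
  Matrix.diagonal fun p => if p.1 = p.2 then (-ε : ℂ) else ((ε / ((N : ℝ) - 1) : ℝ) : ℂ)

/-!
For a real diagonal `D = diag d` the positive part `Z = diag d⁺` is the cheapest feasible `Z`
entrywise on the diagonal: every feasible `Z` has `Z p p ≥ max (d p) 0`, so
`λ ≥ (Tr_B Z) μ μ ≥ ∑ₐ d⁺(μ, a)`. When all these row sums equal `s`, the choice `Z = diag d⁺`
gives `Tr_B Z = s • 1`, so `s` is attained. For the dephasing difference the row sums are
`(N - 1) · ε / (N - 1) = ε`.
-/

variable {N : ℕ}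

lemma ptrB_diagonal (d : Fin N × Fin N → ℂ) :
    ptrB (diagonal d) = diagonal fun μ => ∑ a, d (μ, a) := by
  ext μ ν
  by_cases h : μ = ν
  · subst h; simp [ptrB]
  · simp [ptrB, diagonal_apply, h]

lemma ofReal_max_zero_le {x : ℝ} {z : ℂ} (hx : (x : ℂ) ≤ z) (hz : 0 ≤ z) :
    ((max x 0 : ℝ) : ℂ) ≤ z := by
  rcases max_choice x 0 with h | h <;> rw [h]
  · exact hx
  · simpa using hz

lemma sum_posPart_le_of_feasible (d : Fin N × Fin N → ℝ) {lam : ℝ}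
    {Z : Matrix (Fin N × Fin N) (Fin N × Fin N) ℂ}
    (hZD : (Z - diagonal fun p => (d p : ℂ)).PosSemidef)
    (hlam : ((lam : ℂ) • (1 : Matrix (Fin N) (Fin N) ℂ) - ptrB Z).PosSemidef)
    (hZ : Z.PosSemidef) (μ : Fin N) :
    ∑ a, max (d (μ, a)) 0 ≤ lam := by
  have hentry : ∀ a, ((max (d (μ, a)) 0 : ℝ) : ℂ) ≤ Z (μ, a) (μ, a) := fun a =>
    ofReal_max_zero_le (by simpa using hZD.diag_nonneg (i := (μ, a))) hZ.diag_nonneg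
  have htrace : ptrB Z μ μ ≤ lam := by simpa using hlam.diag_nonneg (i := μ)
  have : ((∑ a, max (d (μ, a)) 0 : ℝ) : ℂ) ≤ lam := by
    push_cast
    exact (Finset.sum_le_sum fun a _ => hentry a).trans htrace
  exact_mod_cast this

theorem isLeast_sdp_diagonal [NeZero N] (d : Fin N × Fin N → ℝ) (s : ℝ)
    (hs : ∀ μ, ∑ a, max (d (μ, a)) 0 = s) :
    IsLeast {lam : ℝ | ∃ Z : Matrix (Fin N × Fin N) (Fin N × Fin N) ℂ,
        (Z - diagonal fun p => (d p : ℂ)).PosSemidef ∧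
        ((lam : ℂ) • (1 : Matrix (Fin N) (Fin N) ℂ) - ptrB Z).PosSemidef ∧
        Z.PosSemidef} s := by
  refine ⟨⟨diagonal fun p => ((max (d p) 0 : ℝ) : ℂ), ?_, ?_, ?_⟩, ?_⟩
  · rw [diagonal_sub]
    exact PosSemidef.diagonal fun p => by simp [← Complex.ofReal_sub]
  · have htrace : ptrB (diagonal fun p => ((max (d p) 0 : ℝ) : ℂ)) = (s : ℂ) • 1 := by
      simp_rw [ptrB_diagonal, ← Complex.ofReal_sum, hs, smul_one_eq_diagonal]
    rw [htrace, sub_self]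
    exact PosSemidef.zero
  · exact PosSemidef.diagonal fun p => by simp
  · rintro lam ⟨Z, hZD, hlam, hZ⟩
    rw [← hs 0]
    exact sum_posPart_le_of_feasible d hZD hlam hZ 0

lemma choiDiff_eq_diagonal (ε : ℝ) :
    choiDiff N ε = diagonal fun p =>
      ((if p.1 = p.2 then -ε else ε / ((N : ℝ) - 1) : ℝ) : ℂ) := by
  unfold choiDiff
  congr 1; ext p; split_ifs <;> simp

lemma sum_posPart_choiDiff (hN : 2 ≤ N) {ε : ℝ} (hε : 0 ≤ ε) (μ : Fin N) :
    ∑ a, max (if μ = a then -ε else ε / ((N : ℝ) - 1)) 0 = ε := by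
  have hN1 : (1 : ℝ) < N := by exact_mod_cast hN
  have hc : 0 ≤ ε / ((N : ℝ) - 1) := div_nonneg hε (by linarith)
  have hrow : ∀ a : Fin N, max (if μ = a then -ε else ε / ((N : ℝ) - 1)) 0
      = ε / ((N : ℝ) - 1) - if μ = a then ε / ((N : ℝ) - 1) else 0 := by
    intro a
    split_ifs
    · simp [hε]
    · simp [hc]
  simp only [hrow, Finset.sum_sub_distrib, Finset.sum_ite_eq, Finset.mem_univ, if_true,
    Finset.sum_const, Finset.card_univ, Fintype.card_fin, nsmul_eq_mul]
  field_simp [(by linarith : (N : ℝ) - 1 ≠ 0)]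

/-- The SDP `min{λ : Z ≥ J_{Λ_ε} - J_Λ, λ·I ≥ Tr_B(Z), Z ≥ 0}` computing the diamond
distance between `Λ` and `Λ_ε` has optimal value `ε`: the diamond distance equals `ε`. -/
theorem stmt13 {N : ℕ} (hN : 2 ≤ N) (ε : ℝ) (hε : ε ∈ Set.Icc (0 : ℝ) 1) :
    IsLeast {lam : ℝ | ∃ Z : Matrix (Fin N × Fin N) (Fin N × Fin N) ℂ,
        (Z - choiDiff N ε).PosSemidef ∧
        ((lam : ℂ) • (1 : Matrix (Fin N) (Fin N) ℂ) - ptrB Z).PosSemidef ∧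
        Z.PosSemidef} ε := by
  have : NeZero N := ⟨by omega⟩
  simp_rw [choiDiff_eq_diagonal]
  exact isLeast_sdp_diagonal _ ε (sum_posPart_choiDiff hN hε.1)
end
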